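/- Let T be a metric tree, η : [0,1] → T a geodesic, and β : [0,1] → T a continuous path with the same endpoints as η. Then for any 1-Lipschitz map φ : T → M into a metric space M, length(φ ∘ η) ≤ length(φ ∘ β). -/

import Mathlib

open Set

/-- `A` is an arc in `T` from `x` to `y`: the image of an injective continuous map
on `[0,1]` with endpoints `x` and `y`. -/
def IsArcIn {T : Type*} [TopologicalSpace T] (A : Set T) (x y : T) : Prop :=
  ∃ f : ℝ → T, ContinuousOn f (Icc 0 1) ∧ InjOn f (Icc 0 1) ∧
    f 0 = x ∧ f 1 = y ∧ f '' (Icc 0 1) = A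

/-- `g : [0,1] → T` is a geodesic: `d(g s, g t) = d(g 0, g 1)·|s - t|`. -/
def IsGeodesicPath {T : Type*} [PseudoMetricSpace T] (g : ℝ → T) : Prop :=
  ∀ s ∈ Icc (0:ℝ) 1, ∀ t ∈ Icc (0:ℝ) 1,
    dist (g s) (g t) = dist (g 0) (g 1) * |s - t|

/-- A metric tree: any two points are joined by a geodesic, and any two distinct points
are joined by a unique arc. -/
structure IsMetricTree (T : Type*) [MetricSpace T] : Prop where
  exists_geodesic : ∀ x y : T, ∃ g : ℝ → T, g 0 = x ∧ g 1 = y ∧ IsGeodesicPath g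
  unique_arc : ∀ x y : T, x ≠ y → ∀ A B : Set T,
    IsArcIn A x y → IsArcIn B x y → A = B

/-- Length of a path on `[0,1]`. -/
noncomputable def pathLen {M : Type*} [PseudoEMetricSpace M] (η : ℝ → M) : ENNReal :=
  eVariationOn η (Set.Icc 0 1)

/-!
In a metric tree the image `[x, z]` of a geodesic from `x` to `z` satisfies the tripod
inclusion `[x, z] ⊆ [x, y] ∪ [y, z]`: following `[x, y]` up to its first point on `[y, z]` and
then `[y, z]` is an arc from `x` to `z`. Chaining this along `ε`-close points shows that `[x, z]`
lies in the closure of every connected set containing `x` and `z`; in particular, whenever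
`β s = η t`, the path `β` has already run through `η '' [0, t]` by time `s`. Hence the first
time `v t` at which `β` visits `η t` is monotone in `t`, and `φ ∘ η = φ ∘ β ∘ v` is a monotone
reparametrisation of part of `φ ∘ β`, so it is no longer.
-/

open Set Metric

namespace IsArcIn

variable {T : Type*} [TopologicalSpace T] {A B : Set T} {x y z : T}

theorem exists_continuous (hA : IsArcIn A x y) : ∃ f : ℝ → T, Continuous f ∧
    InjOn f (Icc 0 1) ∧ f 0 = x ∧ f 1 = y ∧ f '' Icc 0 1 = A := by
  obtain ⟨f, hfc, hfi, hf0, hf1, hfA⟩ := hA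
  have hf : EqOn (IccExtend zero_le_one ((Icc 0 1).domRestrict f)) f (Icc 0 1) :=
    fun t ht => IccExtend_of_mem _ _ ht
  exact ⟨_, (continuousOn_iff_continuous_domRestrict.1 hfc).Icc_extend', hfi.congr hf.symm,
    (hf (left_mem_Icc.2 zero_le_one)).trans hf0, (hf (right_mem_Icc.2 zero_le_one)).trans hf1,
    hf.image_eq.trans hfA⟩

theorem union (hA : IsArcIn A x y) (hB : IsArcIn B y z) (hAB : A ∩ B ⊆ {y}) :
    IsArcIn (A ∪ B) x z := by
  obtain ⟨f, hfc, hfi, hf0, hf1, rfl⟩ := hA.exists_continuous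
  obtain ⟨g, hgc, hgi, hg0, hg1, rfl⟩ := hB.exists_continuous
  let F : ℝ → T := fun r => if r ≤ 1 / 2 then f (2 * r) else g (2 * r - 1)
  have hF₁ : EqOn F (f ∘ (2 * ·)) (Icc 0 (1 / 2)) := fun r hr => if_pos hr.2
  have hF₂ : EqOn F (g ∘ (2 * · - 1)) (Icc (1 / 2) 1) := fun r hr => by
    rcases hr.1.eq_or_lt with rfl | h
    · simp only [F, le_refl, if_true, Function.comp_apply]
      norm_num [hf1, hg0]
    · exact if_neg h.not_ge
  have hI₁ : (2 * ·) '' Icc 0 (1 / 2) = Icc (0 : ℝ) 1 := by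
    rw [image_mul_left_Icc zero_le_two (by norm_num)]; norm_num
  have hI₂ : (2 * · - 1) '' Icc (1 / 2) 1 = Icc (0 : ℝ) 1 := by
    rw [← image_image (· - 1) (2 * ·), image_mul_left_Icc zero_le_two (by norm_num),
      image_sub_const_Icc]; norm_num
  have hmaps₁ : MapsTo (2 * ·) (Icc 0 (1 / 2)) (Icc (0 : ℝ) 1) := hI₁ ▸ mapsTo_image _ _
  have hmaps₂ : MapsTo (2 * · - 1) (Icc (1 / 2) 1) (Icc (0 : ℝ) 1) := hI₂ ▸ mapsTo_image _ _
  have hhalf : (0 : ℝ) ≤ 1 / 2 ∧ (1 / 2 : ℝ) ≤ 1 := by norm_num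
  refine ⟨F, ?_, ?_, by simp [F, hf0], by norm_num [F, hg1], ?_⟩
  · refine (Continuous.if_le (hfc.comp (by fun_prop)) (hgc.comp (by fun_prop)) continuous_id
      continuous_const fun r hr => ?_).continuousOn
    rw [show r = 1 / 2 from hr]
    norm_num [hf1, hg0]
  · intro r hr r' hr' hrr'
    wlog hle : r ≤ r' generalizing r r'
    · exact (this hr' hr hrr'.symm (le_of_not_ge hle)).symm
    by_cases h₂ : r' ≤ 1 / 2
    · have := hfi (hmaps₁ ⟨hr.1, hle.trans h₂⟩) (hmaps₁ ⟨hr'.1, h₂⟩)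
        (by simpa [hF₁ ⟨hr.1, hle.trans h₂⟩, hF₁ ⟨hr'.1, h₂⟩] using hrr')
      linarith
    by_cases h₁ : 1 / 2 ≤ r
    · have := hgi (hmaps₂ ⟨h₁, hr.2⟩) (hmaps₂ ⟨h₁.trans hle, hr'.2⟩)
        (by simpa [hF₂ ⟨h₁, hr.2⟩, hF₂ ⟨h₁.trans hle, hr'.2⟩] using hrr')
      linarith
    -- `F r = F r'` lies on both arcs, hence is their common endpoint
    rw [not_le] at h₁ h₂
    have hfr : F r = f (2 * r) := hF₁ ⟨hr.1, h₁.le⟩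
    have hgr' : F r' = g (2 * r' - 1) := hF₂ ⟨h₂.le, hr'.2⟩
    have hy : F r = y := hAB ⟨hfr ▸ mem_image_of_mem f (hmaps₁ ⟨hr.1, h₁.le⟩),
      hrr' ▸ hgr' ▸ mem_image_of_mem g (hmaps₂ ⟨h₂.le, hr'.2⟩)⟩
    have e₁ := hfi (hmaps₁ ⟨hr.1, h₁.le⟩) (right_mem_Icc.2 zero_le_one) (by rw [← hfr, hy, hf1])
    have e₂ := hgi (hmaps₂ ⟨h₂.le, hr'.2⟩) (left_mem_Icc.2 zero_le_one)
      (by rw [← hgr', ← hrr', hy, hg0])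
    linarith
  · conv_lhs => rw [← Icc_union_Icc_eq_Icc hhalf.1 hhalf.2]
    rw [image_union, hF₁.image_eq, hF₂.image_eq, image_comp, image_comp, hI₁, hI₂]

end IsArcIn

namespace IsGeodesicPath

section PseudoMetricSpace

variable {T : Type*} [PseudoMetricSpace T] {g : ℝ → T}

theorem lipschitzOnWith (hg : IsGeodesicPath g) :
    LipschitzOnWith (Real.toNNReal (dist (g 0) (g 1))) g (Icc 0 1) := by
  refine LipschitzOnWith.of_dist_le_mul fun s hs t ht => ?_
  rw [hg s hs t ht, Real.coe_toNNReal _ dist_nonneg, Real.dist_eq]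

theorem continuousOn (hg : IsGeodesicPath g) : ContinuousOn g (Icc 0 1) :=
  hg.lipschitzOnWith.continuousOn

theorem dist_le (hg : IsGeodesicPath g) {s t : ℝ} (hs : s ∈ Icc (0 : ℝ) 1)
    (ht : t ∈ Icc (0 : ℝ) 1) : dist (g s) (g t) ≤ dist (g 0) (g 1) := by
  rw [hg s hs t ht]
  exact mul_le_of_le_one_right dist_nonneg
    (by simpa using abs_sub_le_of_le_of_le hs.1 hs.2 ht.1 ht.2)

theorem image_subset_thickening (hg : IsGeodesicPath g) {K : Set T} {s ε : ℝ}
    (hs : s ∈ Icc (0 : ℝ) 1) (hK : g s ∈ K) (hε : dist (g 0) (g 1) < ε) :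
    g '' Icc 0 1 ⊆ thickening ε K := by
  rintro _ ⟨t, ht, rfl⟩
  exact mem_thickening_iff.2 ⟨g s, hK, (hg.dist_le ht hs).trans_lt hε⟩

theorem exists_restrict (hg : IsGeodesicPath g) {a b : ℝ} (ha : 0 ≤ a) (hab : a ≤ b)
    (hb : b ≤ 1) : ∃ h : ℝ → T, IsGeodesicPath h ∧ h 0 = g a ∧ h 1 = g b ∧
      h '' Icc 0 1 = g '' Icc a b := by
  have hI : (fun r => (b - a) * r + a) '' Icc 0 1 = Icc a b := by
    rw [← image_image (· + a) ((b - a) * ·), image_mul_left_Icc (sub_nonneg.2 hab) zero_le_one,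
      image_add_const_Icc]
    simp
  have hmem : ∀ r ∈ Icc (0 : ℝ) 1, (b - a) * r + a ∈ Icc (0 : ℝ) 1 := fun r hr =>
    Icc_subset_Icc ha hb (hI ▸ mem_image_of_mem _ hr)
  refine ⟨fun r => g ((b - a) * r + a), fun s hs t ht => ?_, by simp, by simp, ?_⟩
  · rw [hg _ (hmem s hs) _ (hmem t ht), hg _ (hmem 0 (left_mem_Icc.2 zero_le_one)) _
      (hmem 1 (right_mem_Icc.2 zero_le_one))]
    rw [show (b - a) * s + a - ((b - a) * t + a) = (b - a) * (s - t) by ring,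
      show (b - a) * 0 + a - ((b - a) * 1 + a) = -(b - a) by ring, abs_mul, abs_neg, mul_assoc]
  · rw [← hI, image_image]

end PseudoMetricSpace

section MetricSpace

variable {T : Type*} [MetricSpace T] {g : ℝ → T}

theorem injOn (hg : IsGeodesicPath g) (h : g 0 ≠ g 1) : InjOn g (Icc 0 1) := by
  intro s hs t ht hst
  have := hg s hs t ht
  rw [hst, dist_self, eq_comm, mul_eq_zero, abs_eq_zero, sub_eq_zero] at this
  exact this.resolve_left (dist_ne_zero.2 h)

theorem image_eq_singleton (hg : IsGeodesicPath g) (h : g 0 = g 1) :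
    g '' Icc 0 1 = {g 0} := by
  refine (image_subset_iff.2 fun t ht => ?_).antisymm
    (singleton_subset_iff.2 ⟨0, left_mem_Icc.2 zero_le_one, rfl⟩)
  have := hg.dist_le ht (left_mem_Icc.2 zero_le_one)
  rw [← h, dist_self] at this
  exact dist_le_zero.1 this

theorem isArcIn (hg : IsGeodesicPath g) (h : g 0 ≠ g 1) :
    IsArcIn (g '' Icc 0 1) (g 0) (g 1) :=
  ⟨g, hg.continuousOn, hg.injOn h, rfl, rfl, rfl⟩

end MetricSpace

end IsGeodesicPath

namespace IsMetricTree

variable {T : Type*} [MetricSpace T] {g g' : ℝ → T}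

theorem image_geodesic_eq (hT : IsMetricTree T) (hg : IsGeodesicPath g)
    (hg' : IsGeodesicPath g') (h0 : g 0 = g' 0) (h1 : g 1 = g' 1) :
    g '' Icc 0 1 = g' '' Icc 0 1 := by
  by_cases hne : g 0 = g 1
  · rw [hg.image_eq_singleton hne, hg'.image_eq_singleton (h0 ▸ h1 ▸ hne), h0]
  · refine hT.unique_arc _ _ hne _ _ (hg.isArcIn hne) ?_
    rw [h0, h1]
    exact hg'.isArcIn (h0 ▸ h1 ▸ hne)

theorem image_geodesic_subset_union (hT : IsMetricTree T) {g₁ g₂ : ℝ → T}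
    (hg : IsGeodesicPath g) (hg₁ : IsGeodesicPath g₁) (hg₂ : IsGeodesicPath g₂)
    (h0 : g 0 = g₁ 0) (h1 : g₁ 1 = g₂ 0) (h2 : g₂ 1 = g 1) :
    g '' Icc 0 1 ⊆ g₁ '' Icc 0 1 ∪ g₂ '' Icc 0 1 := by
  by_cases hxz : g 0 = g 1
  · rw [hg.image_eq_singleton hxz, h0, singleton_subset_iff]
    exact Or.inl (mem_image_of_mem _ (left_mem_Icc.2 zero_le_one))
  -- `g₁ t₀ = g₂ s₀` is the first point of `g₁` on the image of `g₂`.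
  have hK₂ : IsClosed (g₂ '' Icc 0 1) :=
    (isCompact_Icc.image_of_continuousOn hg₂.continuousOn).isClosed
  obtain ⟨t₀, ⟨ht₀, s₀, hs₀, hw⟩, ht₀_min⟩ :
      ∃ t₀, IsLeast (Icc 0 1 ∩ g₁ ⁻¹' (g₂ '' Icc 0 1)) t₀ :=
    ⟨_, IsClosed.isLeast_csInf (hg₁.continuousOn.preimage_isClosed_of_isClosed isClosed_Icc hK₂)
      ⟨1, right_mem_Icc.2 zero_le_one, 0, left_mem_Icc.2 zero_le_one, h1.symm⟩
      ⟨0, fun _ h => h.1.1⟩⟩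
  obtain ⟨h₁, hh₁, hh₁0, hh₁1, hh₁_img⟩ := hg₁.exists_restrict le_rfl ht₀.1 ht₀.2
  obtain ⟨h₂, hh₂, hh₂0, hh₂1, hh₂_img⟩ := hg₂.exists_restrict hs₀.1 hs₀.2 le_rfl
  rw [← h0] at hh₁0
  rw [hw] at hh₂0
  rw [h2] at hh₂1
  have hsub₁ : g₁ '' Icc 0 t₀ ⊆ g₁ '' Icc 0 1 := image_mono (Icc_subset_Icc_right ht₀.2)
  have hsub₂ : g₂ '' Icc s₀ 1 ⊆ g₂ '' Icc 0 1 := image_mono (Icc_subset_Icc_left hs₀.1)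
  by_cases hxw : g 0 = g₁ t₀
  · rw [hT.image_geodesic_eq hg hh₂ (hxw.trans hh₂0.symm) hh₂1.symm, hh₂_img]
    exact hsub₂.trans subset_union_right
  by_cases hwz : g₁ t₀ = g 1
  · rw [hT.image_geodesic_eq hg hh₁ hh₁0.symm (hwz.symm.trans hh₁1.symm), hh₁_img]
    exact hsub₁.trans subset_union_left
  have hA : IsArcIn (g₁ '' Icc 0 t₀) (g 0) (g₁ t₀) := by
    rw [← hh₁_img, ← hh₁0, ← hh₁1]
    exact hh₁.isArcIn (by rwa [hh₁0, hh₁1])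
  have hB : IsArcIn (g₂ '' Icc s₀ 1) (g₁ t₀) (g 1) := by
    rw [← hh₂_img, ← hh₂0, ← hh₂1]
    exact hh₂.isArcIn (by rwa [hh₂0, hh₂1])
  have hAB : g₁ '' Icc 0 t₀ ∩ g₂ '' Icc s₀ 1 ⊆ {g₁ t₀} := by
    rintro _ ⟨⟨t, ht, rfl⟩, hmem⟩
    rw [ht.2.antisymm (ht₀_min ⟨⟨ht.1, ht.2.trans ht₀.2⟩, hsub₂ hmem⟩)]
    rfl
  rw [hT.unique_arc _ _ hxz _ _ (hg.isArcIn hxz) (hA.union hB hAB)]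
  exact union_subset_union hsub₁ hsub₂

theorem image_geodesic_subset_closure (hT : IsMetricTree T) {K : Set T}
    (hK : IsPreconnected K) (hg : IsGeodesicPath g) (h0 : g 0 ∈ K) (h1 : g 1 ∈ K) :
    g '' Icc 0 1 ⊆ closure K := by
  rw [closure_eq_iInter_thickening]
  refine subset_iInter₂ fun ε hε => ?_
  let P : T → T → Prop := fun x y => ∀ g : ℝ → T, IsGeodesicPath g → g 0 = x → g 1 = y →
    g '' Icc 0 1 ⊆ thickening ε K
  refine hK.induction₂' P (fun x hx => ?_) (fun x y z _ _ _ hxy hyz => ?_) h0 h1 g hg rfl rfl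
  · filter_upwards [nhdsWithin_le_nhds (ball_mem_nhds x hε)] with y hy
    refine ⟨fun g hg hg0 hg1 => ?_, fun g hg hg0 hg1 => ?_⟩
    · exact hg.image_subset_thickening (left_mem_Icc.2 zero_le_one) (hg0 ▸ hx)
        (by rwa [hg0, hg1, dist_comm])
    · exact hg.image_subset_thickening (right_mem_Icc.2 zero_le_one) (hg1 ▸ hx)
        (by rwa [hg0, hg1])
  · intro g hg hg0 hg1
    obtain ⟨g₁, hg₁0, hg₁1, hg₁⟩ := hT.exists_geodesic x y
    obtain ⟨g₂, hg₂0, hg₂1, hg₂⟩ := hT.exists_geodesic y z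
    refine (hT.image_geodesic_subset_union hg hg₁ hg₂ (hg0.trans hg₁0.symm)
      (hg₁1.trans hg₂0.symm) (hg₂1.trans hg1.symm)).trans ?_
    exact union_subset (hxy g₁ hg₁ hg₁0 hg₁1) (hyz g₂ hg₂ hg₂0 hg₂1)

theorem image_geodesic_Icc_subset (hT : IsMetricTree T) {β : ℝ → T} (hg : IsGeodesicPath g)
    {s t : ℝ} (hs : 0 ≤ s) (ht : t ∈ Icc (0 : ℝ) 1) (hβ : ContinuousOn β (Icc 0 s))
    (h0 : β 0 = g 0) (hst : β s = g t) :
    g '' Icc 0 t ⊆ β '' Icc 0 s := by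
  obtain ⟨h, hh, hh0, hh1, hh_img⟩ := hg.exists_restrict le_rfl ht.1 ht.2
  rw [← hh_img, ← (isCompact_Icc.image_of_continuousOn hβ).isClosed.closure_eq]
  exact hT.image_geodesic_subset_closure (isPreconnected_Icc.image _ hβ) hh
    (hh0 ▸ h0 ▸ mem_image_of_mem β (left_mem_Icc.2 hs))
    (hh1 ▸ hst ▸ mem_image_of_mem β (right_mem_Icc.2 hs))

end IsMetricTree

theorem eVariationOn_comp_le_of_image_Icc_subset {T E : Type*} [TopologicalSpace T]
    [T1Space T] [PseudoEMetricSpace E] {f g : ℝ → T} (hg : ContinuousOn g (Icc 0 1))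
    (hfg : f '' Icc 0 1 ⊆ g '' Icc 0 1)
    (hsub : ∀ t ∈ Icc (0 : ℝ) 1, ∀ s ∈ Icc (0 : ℝ) 1, g s = f t → f '' Icc 0 t ⊆ g '' Icc 0 s)
    (φ : T → E) : eVariationOn (φ ∘ f) (Icc 0 1) ≤ eVariationOn (φ ∘ g) (Icc 0 1) := by
  have hfirst : ∀ t ∈ Icc (0 : ℝ) 1, ∃ s, IsLeast (Icc 0 1 ∩ g ⁻¹' {f t}) s := fun t ht =>
    ⟨_, IsClosed.isLeast_csInf (hg.preimage_isClosed_of_isClosed isClosed_Icc isClosed_singleton)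
      (hfg (mem_image_of_mem f ht)) ⟨0, fun _ h => h.1.1⟩⟩
  -- `v t` is the first time at which `g` visits `f t`.
  choose! v hv using hfirst
  have hv_maps : MapsTo v (Icc 0 1) (Icc 0 1) := fun t ht => (hv t ht).1.1
  have hv_eq : EqOn (φ ∘ g ∘ v) (φ ∘ f) (Icc 0 1) := fun t ht =>
    congrArg φ (hv t ht).1.2
  have hv_mono : MonotoneOn v (Icc 0 1) := by
    intro t ht t' ht' htt'
    obtain ⟨s, hs, hgs⟩ := hsub t' ht' (v t') (hv_maps ht') (hv t' ht').1.2
      (mem_image_of_mem f ⟨ht.1, htt'⟩)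
    exact ((hv t ht).2 ⟨⟨hs.1, hs.2.trans (hv_maps ht').2⟩, hgs⟩).trans hs.2
  calc eVariationOn (φ ∘ f) (Icc 0 1) = eVariationOn ((φ ∘ g) ∘ v) (Icc 0 1) :=
        (eVariationOn.eq_of_eqOn hv_eq).symm
    _ ≤ eVariationOn (φ ∘ g) (Icc 0 1) := eVariationOn.comp_le_of_monotoneOn _ _ hv_mono hv_maps

theorem stmt6_general {T M : Type*} [MetricSpace T] [MetricSpace M] (hT : IsMetricTree T)
    (η β : ℝ → T) (hη : IsGeodesicPath η)
    (hβ : ContinuousOn β (Icc 0 1)) (h0 : β 0 = η 0) (h1 : β 1 = η 1)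
    (φ : T → M) :
    pathLen (φ ∘ η) ≤ pathLen (φ ∘ β) :=
  eVariationOn_comp_le_of_image_Icc_subset hβ
    (hT.image_geodesic_Icc_subset hη zero_le_one (right_mem_Icc.2 zero_le_one) hβ h0 h1)
    (fun _ ht _ hs hst => hT.image_geodesic_Icc_subset hη hs.1 ht
      (hβ.mono (Icc_subset_Icc_right hs.2)) h0 hst) φ

/-- In a metric tree `T`, if `η` is a geodesic and `β` a continuous path with the same
endpoints, then for any 1-Lipschitz map `φ : T → M`,
`length(φ ∘ η) ≤ length(φ ∘ β)`. -/
theorem stmt6 {T M : Type*} [MetricSpace T] [MetricSpace M] (hT : IsMetricTree T)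
    (η β : ℝ → T) (hη : IsGeodesicPath η)
    (hβ : ContinuousOn β (Icc 0 1)) (h0 : β 0 = η 0) (h1 : β 1 = η 1)
    (φ : T → M) (hφ : LipschitzWith 1 φ) :
    pathLen (φ ∘ η) ≤ pathLen (φ ∘ β) :=
  stmt6_general hT η β hη hβ h0 h1 φ
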